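/- arXiv:2201.11263 — 2 statements merged into one kernel-verified Lean document; each statement's English description precedes it below -/
import Mathlib

section
/- In the polynomial ring S = k[x_1,...,x_n] with maximal ideal 𝔪 = (x_1,...,x_n), for every integer p ≥ 1 one has the ideal equality (x_1^2,...,x_n^2)·𝔪^{p−1} = (x_1^2,...,x_n^2) ∩ 𝔪^{p+1}. -/
open MvPolynomial

namespace MvPolynomial

variable {σ R : Type*} [CommSemiring R]

theorem span_monomial_le_pow_idealOfVars {s : Set (σ →₀ ℕ)} {d : ℕ}
    (hs : ∀ m ∈ s, m.degree = d) :
    Ideal.span ((monomial · (1 : R)) '' s) ≤ idealOfVars σ R ^ d := by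
  rw [Ideal.span_le]
  rintro _ ⟨m, hm, rfl⟩
  refine (mem_pow_idealOfVars_iff d _).2 fun x hx => ?_
  rw [Finset.mem_singleton.1 (support_monomial_subset hx), hs m hm]

theorem span_monomial_mul_pow_idealOfVars {s : Set (σ →₀ ℕ)} {d : ℕ}
    (hs : ∀ m ∈ s, m.degree = d) (q : ℕ) :
    Ideal.span ((monomial · (1 : R)) '' s) * idealOfVars σ R ^ q =
      Ideal.span ((monomial · (1 : R)) '' s) ⊓ idealOfVars σ R ^ (d + q) := by
  refine le_antisymm (le_inf Ideal.mul_le_left ?_) ?_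
  · rw [pow_add]
    exact Ideal.mul_mono_left (span_monomial_le_pow_idealOfVars hs)
  -- A monomial of degree `≥ d + q` divisible by a generator `m` is `m` times a monomial of
  -- degree `≥ q`.
  intro f hf
  obtain ⟨hfI, hfM⟩ := Submodule.mem_inf.1 hf
  rw [mem_ideal_span_monomial_image] at hfI
  rw [mem_pow_idealOfVars_iff] at hfM
  rw [f.as_sum]
  refine Ideal.sum_mem _ fun x hx => ?_
  obtain ⟨m, hm, hmx⟩ := hfI x hx
  obtain ⟨y, rfl⟩ := exists_add_of_le hmx
  have hy : q ≤ y.degree := by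
    have := hfM _ hx
    rw [map_add, hs m hm] at this
    omega
  rw [← one_mul (coeff _ f), ← monomial_mul]
  refine Ideal.mul_mem_mul (Ideal.subset_span ⟨m, hm, rfl⟩) ?_
  refine (mem_pow_idealOfVars_iff q _).2 fun z hz => ?_
  rwa [Finset.mem_singleton.1 (support_monomial_subset hz)]

end MvPolynomial

/-- In `S = k[x_1,...,x_n]` with `𝔪 = (x_1,...,x_n)`, for every `p ≥ 1` one has
`(x_1^2,...,x_n^2) · 𝔪^{p-1} = (x_1^2,...,x_n^2) ∩ 𝔪^{p+1}`. -/
theorem stmt2 (k : Type*) [Field k] (n p : ℕ) (hp : 1 ≤ p) :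
    (Ideal.span (Set.range fun i : Fin n => (X i : MvPolynomial (Fin n) k) ^ 2)) *
      (Ideal.span (Set.range fun i : Fin n => (X i : MvPolynomial (Fin n) k))) ^ (p - 1) =
    (Ideal.span (Set.range fun i : Fin n => (X i : MvPolynomial (Fin n) k) ^ 2)) ⊓
      (Ideal.span (Set.range fun i : Fin n => (X i : MvPolynomial (Fin n) k))) ^ (p + 1) := by
  have hsquares : (Set.range fun i : Fin n => (X i : MvPolynomial (Fin n) k) ^ 2) =
      (monomial · 1) '' Set.range fun i => Finsupp.single i 2 := by
    rw [← Set.range_comp]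
    simp only [Function.comp_def, X_pow_eq_monomial]
  have hdeg : ∀ m ∈ Set.range fun i : Fin n => Finsupp.single i 2, m.degree = 2 := by
    rintro _ ⟨i, rfl⟩
    exact Finsupp.degree_single i 2
  rw [hsquares, span_monomial_mul_pow_idealOfVars hdeg, show 2 + (p - 1) = p + 1 by omega]
end

section
/- Let G be the set of monomials of degree 3 in k[x_1,...,x_n] consisting of all non-square-free cubic monomials together with a set of square-free cubics, and suppose that for every choice of four distinct variables, the number of square-free cubics in G supported on those four variables is either 0 or at least 2. Then G satisfies the path condition: for any f, g ∈ G there is a sequence f = h_0, ..., h_t = g of elements of G, each dividing lcm(f,g), with deg lcm(h_k, h_{k+1}) = 4 for all k. -/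
/-!
Write `L = lcm(f, g)`. If some `x²` divides `L`, every generator dividing `L` is joined inside `L`
to a non-square-free cubic: a square-free `x·p·q` is adjacent to `x²·p`, and a square-free cubic
avoiding `x` first moves to a neighbour containing `x`, which the four-variable condition applied to
its support and `x` provides. The non-square-free cubics dividing `L` all lie in `G` and are
connected among themselves (`x²y ~ x²z ~ z²x`).

If `L` is square-free, so are all generators involved. Trading a variable of `f` for a variable
`d` of `g` by the four-variable condition brings `f` closer to `g`, unless the variable given up is
shared with `g`. In that configuration `f = abc`, `g = cde`, `abd ∈ G`, and the four-variable
condition applied to `g` and `a` yields a path of length at most three.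
-/

/-- Total degree of an exponent vector. -/
def mdeg {σ : Type*} [Fintype σ] (v : σ → ℕ) : ℕ := ∑ i, v i

/-- There is a path in `G` from `f` to `g` all of whose members divide
`lcm(f,g)` and in which consecutive members have lcm of degree `dd + 1`. -/
def pathBetween {σ : Type*} [Fintype σ] (G : Set (σ → ℕ)) (dd : ℕ)
    (f g : σ → ℕ) : Prop :=
  ∃ (t : ℕ) (h : ℕ → σ → ℕ), h 0 = f ∧ h t = g ∧
    (∀ k ≤ t, h k ∈ G ∧ h k ≤ f ⊔ g) ∧
    (∀ k < t, mdeg (h k ⊔ h (k + 1)) = dd + 1)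

/-- The path condition characterizing linear presentation. -/
def PathCond {σ : Type*} [Fintype σ] (G : Set (σ → ℕ)) (dd : ℕ) : Prop :=
  ∀ f ∈ G, ∀ g ∈ G, pathBetween G dd f g

section Degree

variable {σ : Type*}

theorem exists_eq_single_add [DecidableEq σ] {v : σ → ℕ} {a : σ} (h : 0 < v a) :
    ∃ w : σ → ℕ, v = Pi.single a 1 + w := by
  refine ⟨v - Pi.single a 1, funext fun i => ?_⟩
  rcases eq_or_ne i a with rfl | hi <;> simp [*]
  omega

variable [Fintype σ]

theorem mdeg_add (v w : σ → ℕ) : mdeg (v + w) = mdeg v + mdeg w :=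
  Finset.sum_add_distrib

theorem mdeg_eq_zero_iff {v : σ → ℕ} : mdeg v = 0 ↔ v = 0 := by
  simp [mdeg, Finset.sum_eq_zero_iff, funext_iff]

theorem mdeg_lt_mdeg {v w : σ → ℕ} (h : v < w) : mdeg v < mdeg w := by
  obtain ⟨hle, i, hi⟩ := Pi.lt_def.1 h
  exact Finset.sum_lt_sum (fun j _ => hle j) ⟨i, Finset.mem_univ i, hi⟩

theorem eq_of_le_of_mdeg_le {v w : σ → ℕ} (h : v ≤ w) (hd : mdeg w ≤ mdeg v) : v = w :=
  by_contra fun hne => (mdeg_lt_mdeg (lt_of_le_of_ne h hne)).not_ge hd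

theorem exists_lt_of_mdeg_eq {v w : σ → ℕ} (hd : mdeg v = mdeg w) (hne : v ≠ w) :
    ∃ i, v i < w i := by
  by_contra! h
  exact hne (eq_of_le_of_mdeg_le h hd.le).symm

variable [DecidableEq σ]

theorem mdeg_single (i : σ) (c : ℕ) : mdeg (Pi.single i c) = c := by
  simp [mdeg]

theorem exists_eq_single_add_of_mdeg_eq_succ {v : σ → ℕ} {k : ℕ} (h : mdeg v = k + 1) :
    ∃ a, ∃ w : σ → ℕ, v = Pi.single a 1 + w ∧ mdeg w = k := by
  obtain ⟨a, -, ha⟩ := Finset.exists_ne_zero_of_sum_ne_zero (h.trans_ne k.succ_ne_zero)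
  obtain ⟨w, rfl⟩ := exists_eq_single_add (Nat.pos_of_ne_zero ha)
  exact ⟨a, w, rfl, by rw [mdeg_add, mdeg_single] at h; omega⟩

theorem exists_add_single_eq {v w : σ → ℕ} (h : v ≤ w) (hd : mdeg w = mdeg v + 1) :
    ∃ i, v + Pi.single i 1 = w := by
  have hw : w = v + (w - v) := funext fun i => (Nat.add_sub_of_le (h i)).symm
  rw [hw, mdeg_add, add_comm] at hd
  obtain ⟨i, u, hu, hu0⟩ := exists_eq_single_add_of_mdeg_eq_succ (v := w - v) (k := 0) (by omega)
  rw [mdeg_eq_zero_iff.1 hu0, add_zero] at hu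
  exact ⟨i, by rw [← hu, ← hw]⟩

end Degree

section Cubic

variable {σ : Type*} [DecidableEq σ]

def cubic (a b c : σ) : σ → ℕ := Pi.single a 1 + Pi.single b 1 + Pi.single c 1

theorem cubic_comm12 (a b c : σ) : cubic a b c = cubic b a c := by
  rw [cubic, cubic, add_comm (Pi.single a 1)]

theorem cubic_comm23 (a b c : σ) : cubic a b c = cubic a c b :=
  add_right_comm _ _ _

theorem cubic_apply_pos_iff {a b c i : σ} : 0 < cubic a b c i ↔ i = a ∨ i = b ∨ i = c := by
  simp only [cubic, Pi.add_apply, Pi.single_apply]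
  split_ifs <;> simp_all

theorem cubic_le_iff {a b c : σ} (hab : a ≠ b) (hac : a ≠ c) (hbc : b ≠ c) {L : σ → ℕ} :
    cubic a b c ≤ L ↔ 0 < L a ∧ 0 < L b ∧ 0 < L c := by
  refine ⟨fun h => ⟨?_, ?_, ?_⟩, fun ⟨ha, hb, hc⟩ i => ?_⟩
  · exact (cubic_apply_pos_iff.2 (Or.inl rfl)).trans_le (h a)
  · exact (cubic_apply_pos_iff.2 (Or.inr (Or.inl rfl))).trans_le (h b)
  · exact (cubic_apply_pos_iff.2 (Or.inr (Or.inr rfl))).trans_le (h c)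
  · simp only [cubic, Pi.add_apply, Pi.single_apply]
    split_ifs <;> simp_all <;> omega

theorem cubic_self_self_le {x y : σ} {L : σ → ℕ} (hxy : x ≠ y) (hx : 2 ≤ L x) (hy : 0 < L y) :
    cubic x x y ≤ L := by
  intro i
  simp only [cubic, Pi.add_apply, Pi.single_apply]
  split_ifs <;> simp_all
  omega

theorem two_le_cubic_self_self (x y : σ) : 2 ≤ cubic x x y x := by
  simp [cubic]

theorem distinct_of_cubic_le_one {a b c : σ} (h : ∀ i, cubic a b c i ≤ 1) :
    a ≠ b ∧ a ≠ c ∧ b ≠ c := by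
  refine ⟨fun hab => ?_, fun hac => ?_, fun hbc => ?_⟩
  · have := h a; simp [cubic, hab] at this; omega
  · have := h a; simp [cubic, hac] at this
  · have := h b; simp [cubic, hbc] at this

theorem ne_of_cubic_apply_lt {a b c d : σ} {g : σ → ℕ} (hg : ∀ i, g i ≤ 1)
    (h : cubic a b c d < g d) : a ≠ d ∧ b ≠ d ∧ c ≠ d := by
  have : ¬ (d = a ∨ d = b ∨ d = c) := fun hd => by
    have := cubic_apply_pos_iff.2 hd
    have := hg d
    omega
  simp only [not_or] at this
  exact ⟨Ne.symm this.1, Ne.symm this.2.1, Ne.symm this.2.2⟩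

theorem mdeg_cubic [Fintype σ] (a b c : σ) : mdeg (cubic a b c) = 3 := by
  simp [cubic, mdeg_add, mdeg_single]

theorem mdeg_cubic_sup_cubic [Fintype σ] {c d : σ} (a b : σ) (hcd : c ≠ d) :
    mdeg (cubic a b c ⊔ cubic a b d) = 4 := by
  have : cubic a b c ⊔ cubic a b d = cubic a b c + Pi.single d 1 := by
    ext i
    simp only [cubic, Pi.sup_apply, Pi.add_apply, Pi.single_apply]
    split_ifs <;> simp_all
  rw [this, mdeg_add, mdeg_cubic, mdeg_single]

theorem exists_eq_cubic [Fintype σ] {v : σ → ℕ} (h : mdeg v = 3) : ∃ a b c, v = cubic a b c := by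
  obtain ⟨a, w, rfl, hw⟩ := exists_eq_single_add_of_mdeg_eq_succ h
  obtain ⟨b, u, rfl, hu⟩ := exists_eq_single_add_of_mdeg_eq_succ hw
  obtain ⟨c, z, rfl, hz⟩ := exists_eq_single_add_of_mdeg_eq_succ hu
  obtain rfl := mdeg_eq_zero_iff.1 hz
  exact ⟨a, b, c, by simp [cubic, add_assoc]⟩

theorem exists_eq_cubic_of_pos [Fintype σ] {v : σ → ℕ} {a b : σ} (h : mdeg v = 3) (hab : a ≠ b)
    (ha : 0 < v a) (hb : 0 < v b) : ∃ c, v = cubic a b c := by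
  obtain ⟨w, rfl⟩ := exists_eq_single_add ha
  obtain ⟨u, rfl⟩ := exists_eq_single_add (v := w) (a := b) (by simpa [hab.symm] using hb)
  obtain ⟨c, u, rfl, hu⟩ := exists_eq_single_add_of_mdeg_eq_succ (v := u) (k := 0)
    (by rw [mdeg_add, mdeg_add, mdeg_single, mdeg_single] at h; omega)
  obtain rfl := mdeg_eq_zero_iff.1 hu
  exact ⟨c, by simp [cubic, add_assoc]⟩

end Cubic

section DualGraph

variable {σ : Type*} [Fintype σ] {G : Set (σ → ℕ)} {dd : ℕ} {L u v : σ → ℕ}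

def DualAdj (G : Set (σ → ℕ)) (dd : ℕ) (L u v : σ → ℕ) : Prop :=
  u ∈ G ∧ v ∈ G ∧ u ≤ L ∧ v ≤ L ∧ mdeg (u ⊔ v) = dd + 1

abbrev DualReachable (G : Set (σ → ℕ)) (dd : ℕ) (L : σ → ℕ) : (σ → ℕ) → (σ → ℕ) → Prop :=
  Relation.ReflTransGen (DualAdj G dd L)

theorem DualAdj.symm (h : DualAdj G dd L u v) : DualAdj G dd L v u := by
  obtain ⟨hu, hv, huL, hvL, h⟩ := h
  exact ⟨hv, hu, hvL, huL, sup_comm u v ▸ h⟩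

theorem DualReachable.symm (h : DualReachable G dd L u v) : DualReachable G dd L v u := by
  induction h with
  | refl => rfl
  | tail _ hxy ih => exact .head hxy.symm ih

theorem dualReachable_of_mdeg_sup (hu : u ∈ G) (hv : v ∈ G) (huL : u ≤ L) (hvL : v ≤ L)
    (h : mdeg (u ⊔ v) = dd + 1) : DualReachable G dd L u v :=
  .single ⟨hu, hv, huL, hvL, h⟩

theorem exists_path_of_dualReachable {f : σ → ℕ} (hf : f ∈ G) (hfL : f ≤ L)
    (h : DualReachable G dd L f v) :
    ∃ (t : ℕ) (p : ℕ → σ → ℕ), p 0 = f ∧ p t = v ∧ (∀ k ≤ t, p k ∈ G ∧ p k ≤ L) ∧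
      ∀ k < t, mdeg (p k ⊔ p (k + 1)) = dd + 1 := by
  induction h with
  | refl =>
    exact ⟨0, fun _ => f, rfl, rfl, fun _ _ => ⟨hf, hfL⟩, fun k hk => absurd hk k.not_lt_zero⟩
  | @tail w x _ hwx ih =>
    obtain ⟨t, p, h0, ht, hmem, hedge⟩ := ih
    obtain ⟨-, hx, -, hxL, hwx⟩ := hwx
    refine ⟨t + 1, fun k => if k ≤ t then p k else x, by simp [h0], by simp, fun k hk => ?_,
      fun k hk => ?_⟩
    · dsimp only
      split_ifs with hkt
      exacts [hmem k hkt, ⟨hx, hxL⟩]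
    · rcases Nat.lt_succ_iff_lt_or_eq.1 hk with hkt | rfl
      · simpa [hkt.le, Nat.succ_le_of_lt hkt] using hedge k hkt
      · simpa [ht] using hwx

theorem pathBetween_of_dualReachable {f g : σ → ℕ} (hf : f ∈ G)
    (h : DualReachable G dd (f ⊔ g) f g) : pathBetween G dd f g :=
  exists_path_of_dualReachable hf le_sup_left h

end DualGraph

section Hypotheses

variable {σ : Type*} [Fintype σ] [DecidableEq σ] {G : Set (σ → ℕ)}

def HasNonSqfreeCubics (G : Set (σ → ℕ)) : Prop :=
  ∀ v : σ → ℕ, mdeg v = 3 → (∃ i, 2 ≤ v i) → v ∈ G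

def sqfreeOn (G : Set (σ → ℕ)) (K : Finset σ) : Set (σ → ℕ) :=
  {v ∈ G | (∀ i, v i ≤ 1) ∧ ∀ i, v i ≠ 0 → i ∈ K}

def FourVarCondition (G : Set (σ → ℕ)) : Prop :=
  ∀ K : Finset σ, K.card = 4 → (sqfreeOn G K).ncard = 0 ∨ 2 ≤ (sqfreeOn G K).ncard

theorem HasNonSqfreeCubics.cubic_mem (hG : HasNonSqfreeCubics G) (x y : σ) : cubic x x y ∈ G :=
  hG _ (mdeg_cubic x x y) ⟨x, two_le_cubic_self_self x y⟩

theorem FourVarCondition.cubic_mem_or (h4 : FourVarCondition G) (hG : ∀ v ∈ G, mdeg v = 3)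
    {a b c d : σ} (hab : a ≠ b) (hac : a ≠ c) (had : a ≠ d) (hbc : b ≠ c) (hbd : b ≠ d)
    (hcd : c ≠ d) (h : cubic a b c ∈ G) :
    cubic a b d ∈ G ∨ cubic a c d ∈ G ∨ cubic b c d ∈ G := by
  by_contra! hne
  set K : Finset σ := {a, b, c, d}
  have hK : K.card = 4 := by
    rw [Finset.card_insert_of_notMem (by simp [hab, hac, had]),
      Finset.card_insert_of_notMem (by simp [hbc, hbd]),
      Finset.card_insert_of_notMem (by simp [hcd]), Finset.card_singleton]
  have hQ : ∀ i, 0 < (cubic a b c + Pi.single d 1 : σ → ℕ) i ↔ i ∈ K := fun i => by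
    rw [Pi.add_apply, Nat.add_pos_iff_pos_or_pos, cubic_apply_pos_iff]
    rcases eq_or_ne i d with rfl | hid <;> simp [K, *]
  have hsub : sqfreeOn G K ⊆ {cubic a b c} := by
    rintro v ⟨hv, hv1, hvK⟩
    have hle : v ≤ cubic a b c + Pi.single d 1 := fun i => by
      rcases Nat.eq_zero_or_pos (v i) with hi | hi
      · simp [hi]
      · exact (hv1 i).trans ((hQ i).2 (hvK i hi.ne'))
    obtain ⟨i, hi⟩ := exists_add_single_eq hle
      (by rw [mdeg_add, mdeg_cubic, mdeg_single, hG v hv])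
    have hiK := (hQ i).1 (hi ▸ by simp)
    simp only [K, Finset.mem_insert, Finset.mem_singleton] at hiK
    rcases hiK with rfl | rfl | rfl | rfl
    · rw [show cubic i b c + Pi.single d 1 = cubic b c d + Pi.single i 1 by
        simp only [cubic]; abel] at hi
      exact absurd (add_right_cancel hi ▸ hv) hne.2.2
    · rw [show cubic a i c + Pi.single d 1 = cubic a c d + Pi.single i 1 by
        simp only [cubic]; abel] at hi
      exact absurd (add_right_cancel hi ▸ hv) hne.2.1
    · rw [show cubic a b i + Pi.single d 1 = cubic a b d + Pi.single i 1 by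
        simp only [cubic]; abel] at hi
      exact absurd (add_right_cancel hi ▸ hv) hne.1
    · exact add_right_cancel hi
  have habc : cubic a b c ∈ sqfreeOn G K :=
    ⟨h, fun i => by simpa using (cubic_le_iff hab hac hbc (L := 1)).2 (by simp) i,
      fun i hi => (hQ i).1 (by simp [Nat.pos_of_ne_zero hi])⟩
  have h1 : (sqfreeOn G K).ncard ≤ 1 :=
    (Set.ncard_le_ncard hsub).trans (Set.ncard_singleton _).le
  have h0 : 0 < (sqfreeOn G K).ncard :=
    (Set.ncard_pos ((Set.finite_singleton _).subset hsub)).2 ⟨_, habc⟩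
  rcases h4 K hK with h | h <;> omega

end Hypotheses

section Linking

variable {σ : Type*} [Fintype σ] [DecidableEq σ] {G : Set (σ → ℕ)} {L : σ → ℕ}

theorem dualReachable_cubic {a b c d : σ} (h₁ : cubic a b c ∈ G) (h₂ : cubic a b d ∈ G)
    (h₁L : cubic a b c ≤ L) (h₂L : cubic a b d ≤ L) :
    DualReachable G 3 L (cubic a b c) (cubic a b d) := by
  rcases eq_or_ne c d with rfl | hcd
  · rfl
  · exact dualReachable_of_mdeg_sup h₁ h₂ h₁L h₂L (mdeg_cubic_sup_cubic a b hcd)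

theorem dualReachable_cubic_self_self (hnsf : HasNonSqfreeCubics G) {x y x' y' : σ}
    (h : cubic x x y ≤ L) (h' : cubic x' x' y' ≤ L) :
    DualReachable G 3 L (cubic x x y) (cubic x' x' y') := by
  rcases eq_or_ne x x' with rfl | hx
  · exact dualReachable_cubic (hnsf.cubic_mem x y) (hnsf.cubic_mem x y') h h'
  have hLx : 2 ≤ L x := (two_le_cubic_self_self x y).trans (h x)
  have hLx' : 2 ≤ L x' := (two_le_cubic_self_self x' y').trans (h' x')
  have h₁ : cubic x x x' ≤ L := cubic_self_self_le hx hLx (by omega)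
  have h₂ : cubic x' x' x ≤ L := cubic_self_self_le hx.symm hLx' (by omega)
  have hswap : DualReachable G 3 L (cubic x x x') (cubic x' x' x) := by
    refine dualReachable_of_mdeg_sup (hnsf.cubic_mem x x') (hnsf.cubic_mem x' x) h₁ h₂ ?_
    rw [cubic_comm23 x x x', cubic_comm23 x' x' x, cubic_comm12 x' x x']
    exact mdeg_cubic_sup_cubic x x' hx
  exact ((dualReachable_cubic (hnsf.cubic_mem x y) (hnsf.cubic_mem x x') h h₁).trans hswap).trans
    (dualReachable_cubic (hnsf.cubic_mem x' x) (hnsf.cubic_mem x' y') h₂ h')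

theorem exists_dualReachable_cubic_self_self (hG : ∀ v ∈ G, mdeg v = 3)
    (hnsf : HasNonSqfreeCubics G) (h4 : FourVarCondition G) {u : σ → ℕ} {x : σ} (hu : u ∈ G)
    (huL : u ≤ L) (hx : 2 ≤ L x) :
    ∃ y z, cubic y y z ≤ L ∧ DualReachable G 3 L u (cubic y y z) := by
  obtain ⟨a, b, c, rfl⟩ := exists_eq_cubic (hG u hu)
  by_cases hab : a = b
  · subst hab
    exact ⟨a, c, huL, .refl⟩
  by_cases hac : a = c
  · subst hac
    rw [cubic_comm23 a b a] at huL ⊢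
    exact ⟨a, b, huL, .refl⟩
  by_cases hbc : b = c
  · subst hbc
    rw [cubic_comm12 a b b, cubic_comm23 b a b] at huL ⊢
    exact ⟨b, a, huL, .refl⟩
  have hsf : ∀ i, cubic a b c i ≤ 1 := (cubic_le_iff hab hac hbc (L := 1)).2 (by simp)
  have key : ∀ p q r, cubic a b c = cubic p q r → p ≠ x → q ≠ x → cubic p q x ∈ G →
      ∃ y z, cubic y y z ≤ L ∧ DualReachable G 3 L (cubic a b c) (cubic y y z) := by
    intro p q r he hpx hqx hmem
    rw [he] at hu huL hsf ⊢
    obtain ⟨hpq, hpr, hqr⟩ := distinct_of_cubic_le_one hsf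
    obtain ⟨hp, hq, -⟩ := (cubic_le_iff hpq hpr hqr).1 huL
    have hmemL : cubic p q x ≤ L := (cubic_le_iff hpq hpx hqx).2 ⟨hp, hq, by omega⟩
    refine ⟨x, p, cubic_self_self_le hpx.symm hx hp,
      (dualReachable_cubic hu hmem huL hmemL).trans
        (dualReachable_of_mdeg_sup hmem (hnsf.cubic_mem x p) hmemL
          (cubic_self_self_le hpx.symm hx hp) ?_)⟩
    rw [cubic_comm23 p q x, cubic_comm23 x x p, cubic_comm12 x p x]
    exact mdeg_cubic_sup_cubic p x hqx
  have hrot : cubic a b c = cubic b c a := (cubic_comm12 a b c).trans (cubic_comm23 b a c)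
  by_cases hxa : x = a
  · subst hxa
    exact key b c x hrot (Ne.symm hab) (Ne.symm hac) (hrot ▸ hu)
  by_cases hxb : x = b
  · subst hxb
    exact key a c x (cubic_comm23 a x c) hab (Ne.symm hbc) (cubic_comm23 a x c ▸ hu)
  by_cases hxc : x = c
  · subst hxc
    exact key a b x rfl hac hbc hu
  rcases h4.cubic_mem_or hG hab hac (Ne.symm hxa) hbc (Ne.symm hxb) (Ne.symm hxc) hu
    with h | h | h
  · exact key a b c rfl (Ne.symm hxa) (Ne.symm hxb) h
  · exact key a c b (cubic_comm23 a b c) (Ne.symm hxa) (Ne.symm hxc) h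
  · exact key b c a hrot (Ne.symm hxb) (Ne.symm hxc) h

theorem dualReachable_of_two_le (hG : ∀ v ∈ G, mdeg v = 3) (hnsf : HasNonSqfreeCubics G)
    (h4 : FourVarCondition G) {f g : σ → ℕ} {x : σ} (hf : f ∈ G) (hg : g ∈ G) (hfL : f ≤ L)
    (hgL : g ≤ L) (hx : 2 ≤ L x) : DualReachable G 3 L f g := by
  obtain ⟨y, z, hyz, hfy⟩ := exists_dualReachable_cubic_self_self hG hnsf h4 hf hfL hx
  obtain ⟨y', z', hyz', hgy⟩ := exists_dualReachable_cubic_self_self hG hnsf h4 hg hgL hx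
  exact (hfy.trans (dualReachable_cubic_self_self hnsf hyz hyz')).trans hgy.symm

end Linking

section Squarefree

variable {σ : Type*} [Fintype σ] [DecidableEq σ] {G : Set (σ → ℕ)} {L : σ → ℕ}

theorem dualReachable_cubic_cubic_of_nodup (hG : ∀ v ∈ G, mdeg v = 3) (h4 : FourVarCondition G)
    {a b c d e : σ} (hn : [a, b, c, d, e].Nodup) (hf : cubic a b c ∈ G) (hg : cubic c d e ∈ G)
    (hfL : cubic a b c ≤ L) (hgL : cubic c d e ≤ L) :
    DualReachable G 3 L (cubic a b c) (cubic c d e) := by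
  simp only [List.nodup_cons, List.mem_cons, List.not_mem_nil, List.nodup_nil, or_false,
    not_or] at hn
  obtain ⟨⟨hab, hac, had, hae⟩, ⟨hbc, hbd, hbe⟩, ⟨hcd, hce⟩, hde, -⟩ := hn
  obtain ⟨ha, hb, hc⟩ := (cubic_le_iff hab hac hbc).1 hfL
  obtain ⟨-, hd, he⟩ := (cubic_le_iff hcd hce hde).1 hgL
  rcases h4.cubic_mem_or hG hab hac had hbc hbd hcd hf with h | h | h
  · have hL : cubic a b d ≤ L := (cubic_le_iff hab had hbd).2 ⟨ha, hb, hd⟩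
    rcases h4.cubic_mem_or hG hcd hce (Ne.symm hac) hde (Ne.symm had) (Ne.symm hae) hg
      with h' | h' | h'
    · have hL' : cubic c d a ≤ L := (cubic_le_iff hcd (Ne.symm hac) (Ne.symm had)).2 ⟨hc, hd, ha⟩
      refine (dualReachable_of_mdeg_sup hf h' hfL hL' ?_).trans (dualReachable_cubic h' hg hL' hgL)
      rw [cubic_comm23 a b c, cubic_comm23 c d a, cubic_comm12 c a d]
      exact mdeg_cubic_sup_cubic a c hbd
    · have hL' : cubic c e a ≤ L := (cubic_le_iff hce (Ne.symm hac) (Ne.symm hae)).2 ⟨hc, he, ha⟩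
      refine (dualReachable_of_mdeg_sup hf h' hfL hL' ?_).trans
        (dualReachable_of_mdeg_sup h' hg hL' hgL ?_)
      · rw [cubic_comm23 a b c, cubic_comm23 c e a, cubic_comm12 c a e]
        exact mdeg_cubic_sup_cubic a c hbe
      · rw [cubic_comm23 c d e]
        exact mdeg_cubic_sup_cubic c e had
    · have hL' : cubic d e a ≤ L := (cubic_le_iff hde (Ne.symm had) (Ne.symm hae)).2 ⟨hd, he, ha⟩
      refine ((dualReachable_cubic hf h hfL hL).trans
        (dualReachable_of_mdeg_sup h h' hL hL' ?_)).trans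
        (dualReachable_of_mdeg_sup h' hg hL' hgL ?_)
      · rw [cubic_comm23 a b d, cubic_comm23 d e a, cubic_comm12 d a e]
        exact mdeg_cubic_sup_cubic a d hbe
      · rw [cubic_comm12 c d e, cubic_comm23 d c e]
        exact mdeg_cubic_sup_cubic d e hac
  · have hL : cubic a c d ≤ L := (cubic_le_iff hac had hcd).2 ⟨ha, hc, hd⟩
    refine (dualReachable_of_mdeg_sup hf h hfL hL ?_).trans
      (dualReachable_of_mdeg_sup h hg hL hgL ?_)
    · rw [cubic_comm23 a b c]
      exact mdeg_cubic_sup_cubic a c hbd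
    · rw [cubic_comm12 a c d, cubic_comm23 c a d]
      exact mdeg_cubic_sup_cubic c d hae
  · have hL : cubic b c d ≤ L := (cubic_le_iff hbc hbd hcd).2 ⟨hb, hc, hd⟩
    refine (dualReachable_of_mdeg_sup hf h hfL hL ?_).trans
      (dualReachable_of_mdeg_sup h hg hL hgL ?_)
    · rw [cubic_comm12 a b c, cubic_comm23 b a c]
      exact mdeg_cubic_sup_cubic b c had
    · rw [cubic_comm12 b c d, cubic_comm23 c b d]
      exact mdeg_cubic_sup_cubic c d hbe

theorem dualReachable_or_exists_closer_of_cubic_mem (hG : ∀ v ∈ G, mdeg v = 3)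
    (h4 : FourVarCondition G) (hL : ∀ i, L i ≤ 1) {a b c d : σ} {g : σ → ℕ}
    (hf : cubic a b c ∈ G) (hh : cubic a b d ∈ G) (hg : g ∈ G) (hfL : cubic a b c ≤ L)
    (hgL : g ≤ L) (hd : cubic a b c d < g d) :
    DualReachable G 3 L (cubic a b c) g ∨ ∃ h ∈ G, h ≤ L ∧
      DualReachable G 3 L (cubic a b c) h ∧ mdeg (h ⊔ g) < mdeg (cubic a b c ⊔ g) := by
  have hg1 : ∀ i, g i ≤ 1 := fun i => (hgL i).trans (hL i)
  obtain ⟨hab, hac, hbc⟩ := distinct_of_cubic_le_one fun i => (hfL i).trans (hL i)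
  obtain ⟨had, hbd, hcd⟩ := ne_of_cubic_apply_lt hg1 hd
  have hgd : 0 < g d := by omega
  obtain ⟨ha, hb, hc⟩ := (cubic_le_iff hab hac hbc).1 hfL
  have hhL : cubic a b d ≤ L := (cubic_le_iff hab had hbd).2 ⟨ha, hb, hgd.trans_le (hgL d)⟩
  have hfh := dualReachable_cubic hf hh hfL hhL
  rcases Nat.eq_zero_or_pos (g c) with hgc | hgc
  · refine Or.inr ⟨_, hh, hhL, hfh, mdeg_lt_mdeg (lt_of_le_of_ne (sup_le ?_ le_sup_right) ?_)⟩
    · refine (cubic_le_iff hab had hbd).2 ⟨?_, ?_, hgd.trans_le le_sup_right⟩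
      · exact (cubic_apply_pos_iff.2 (Or.inl rfl)).trans_le le_sup_left
      · exact (cubic_apply_pos_iff.2 (Or.inr (Or.inl rfl))).trans_le le_sup_left
    · intro he
      have hdc : cubic a b d c = 0 := Nat.eq_zero_of_not_pos fun h => by
        rcases cubic_apply_pos_iff.1 h with h | h | h <;> simp_all
      have := congrFun he c
      have := cubic_apply_pos_iff.2 (Or.inr (Or.inr rfl) : c = a ∨ c = b ∨ c = c)
      simp only [Pi.sup_apply, hdc, hgc] at *
      omega
  · obtain ⟨e, rfl⟩ := exists_eq_cubic_of_pos (hG g hg) hcd hgc hgd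
    obtain ⟨-, hce, hde⟩ := distinct_of_cubic_le_one hg1
    left
    by_cases hea : e = a
    · subst hea
      refine dualReachable_of_mdeg_sup hf hg hfL hgL ?_
      rw [cubic_comm23 e b c, cubic_comm23 c d e, cubic_comm12 c e d]
      exact mdeg_cubic_sup_cubic e c hbd
    by_cases heb : e = b
    · subst heb
      refine dualReachable_of_mdeg_sup hf hg hfL hgL ?_
      rw [cubic_comm12 a e c, cubic_comm23 e a c, cubic_comm23 c d e, cubic_comm12 c e d]
      exact mdeg_cubic_sup_cubic e c had
    exact dualReachable_cubic_cubic_of_nodup hG h4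
      (by simp [hab, hac, had, Ne.symm hea, hbc, hbd, Ne.symm heb, hcd, hce, hde]) hf hg hfL hgL

theorem dualReachable_or_exists_closer (hG : ∀ v ∈ G, mdeg v = 3) (h4 : FourVarCondition G)
    (hL : ∀ i, L i ≤ 1) {f g : σ → ℕ} (hf : f ∈ G) (hg : g ∈ G) (hfL : f ≤ L) (hgL : g ≤ L)
    (hfg : f ≠ g) :
    DualReachable G 3 L f g ∨
      ∃ h ∈ G, h ≤ L ∧ DualReachable G 3 L f h ∧ mdeg (h ⊔ g) < mdeg (f ⊔ g) := by
  obtain ⟨d, hd⟩ := exists_lt_of_mdeg_eq ((hG f hf).trans (hG g hg).symm) hfg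
  obtain ⟨a, b, c, rfl⟩ := exists_eq_cubic (hG f hf)
  obtain ⟨hab, hac, hbc⟩ := distinct_of_cubic_le_one fun i => (hfL i).trans (hL i)
  obtain ⟨had, hbd, hcd⟩ := ne_of_cubic_apply_lt (fun i => (hgL i).trans (hL i)) hd
  rcases h4.cubic_mem_or hG hab hac had hbc hbd hcd hf with h | h | h
  · exact dualReachable_or_exists_closer_of_cubic_mem hG h4 hL hf h hg hfL hgL hd
  · rw [cubic_comm23 a b c] at hf hfL hd ⊢
    exact dualReachable_or_exists_closer_of_cubic_mem hG h4 hL hf h hg hfL hgL hd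
  · rw [cubic_comm12 a b c, cubic_comm23 b a c] at hf hfL hd ⊢
    exact dualReachable_or_exists_closer_of_cubic_mem hG h4 hL hf h hg hfL hgL hd

theorem dualReachable_of_sqfree (hG : ∀ v ∈ G, mdeg v = 3) (h4 : FourVarCondition G)
    (hL : ∀ i, L i ≤ 1) {f g : σ → ℕ} (hf : f ∈ G) (hg : g ∈ G) (hfL : f ≤ L) (hgL : g ≤ L) :
    DualReachable G 3 L f g := by
  induction hm : mdeg (f ⊔ g) using Nat.strong_induction_on generalizing f with
  | _ m ih =>
    rcases eq_or_ne f g with rfl | hfg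
    · rfl
    rcases dualReachable_or_exists_closer hG h4 hL hf hg hfL hgL hfg with h | ⟨h, hh, hhL, hfh, hlt⟩
    · exact h
    · exact hfh.trans (ih _ (hm ▸ hlt) hh hhL rfl)

end Squarefree

/-- A set `G` of cubic monomials containing all non-square-free cubics, such
that for every four distinct variables the number of square-free cubics of `G`
supported on them is `0` or at least `2`, satisfies the path condition. -/
theorem stmt12 (n : ℕ) (G : Set (Fin n → ℕ))
    (hG : ∀ v ∈ G, mdeg v = 3)
    (hnsf : ∀ v : Fin n → ℕ, mdeg v = 3 → (∃ i, 2 ≤ v i) → v ∈ G)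
    (h4 : ∀ K : Finset (Fin n), K.card = 4 →
      {v ∈ G | (∀ i, v i ≤ 1) ∧ ∀ i, v i ≠ 0 → i ∈ K}.ncard = 0 ∨
        2 ≤ {v ∈ G | (∀ i, v i ≤ 1) ∧ ∀ i, v i ≠ 0 → i ∈ K}.ncard) :
    PathCond G 3 := by
  intro f hf g hg
  refine pathBetween_of_dualReachable hf ?_
  by_cases hsq : ∃ x, 2 ≤ (f ⊔ g) x
  · obtain ⟨x, hx⟩ := hsq
    exact dualReachable_of_two_le hG hnsf h4 hf hg le_sup_left le_sup_right hx
  · push Not at hsq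
    exact dualReachable_of_sqfree hG h4 (fun i => Nat.le_of_lt_succ (hsq i)) hf hg le_sup_left
      le_sup_right
end
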